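/- Let M, B_f, B_m, A_m, λ_u, λ_f be positive real constants and let 0 < X_min ≤ X_max < 1/λ_f. Define F(x) = (M·λ_u·x)/(B_f·(1 − e^{−λ_u·x})) + (A_m·λ_u·(1 − λ_f·x))/(B_m·(1 − e^{−A_m·λ_u·(1−λ_f·x)})). Assume (i) λ_f·A_m·B_f > M·B_m, and (ii) A_m·(1 − λ_f·x) ≥ x for every x ∈ [X_min, X_max]. Then F is antitone (monotone nonincreasing) on [X_min, X_max]; in particular F(X_max) ≤ F(x) for all x ∈ [X_min, X_max], so the minimum of F over [X_min, X_max] is attained at x = X_max. -/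

import Mathlib

/-!
With `g t = t / (1 - exp (-t))` the objective reads
`F z = M / B_f * g (λ_u z) + B_m⁻¹ * g (A_m λ_u (1 - λ_f z))`. The function `g` is increasing
and convex on `(0, ∞)`: its second derivative has the sign of
`t (1 + e^{-t}) - 2 (1 - e^{-t}) ≥ 0`. When `z` grows from `x` to `y`, the argument of the first
term sweeps `[λ_u x, λ_u y]` while that of the second sweeps backwards an interval `A_m λ_f`
times as long which, by (ii), lies to the right of it. Convexity makes the slope of `g` on the
second interval at least that on the first, and (i) then lets the loss of the second term
outweigh the gain of the first.
-/

open Real Set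

theorem ConvexOn.slope_le_slope_of_le {𝕜 : Type*} [Field 𝕜] [LinearOrder 𝕜]
    [IsStrictOrderedRing 𝕜] {s : Set 𝕜} {f : 𝕜 → 𝕜} (hf : ConvexOn 𝕜 s f) {a a' b' b : 𝕜}
    (ha : a ∈ s) (ha' : a' ∈ s) (hb' : b' ∈ s) (hb : b ∈ s)
    (haa' : a < a') (hb'b : b' < b) (hab' : a ≤ b') (ha'b : a' ≤ b) :
    slope f a a' ≤ slope f b' b := by
  have hab : a < b := haa'.trans_le ha'b
  calc slope f a a' ≤ slope f a b := hf.slope_mono ha ⟨ha', haa'.ne'⟩ ⟨hb, hab.ne'⟩ ha'b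
    _ = slope f b a := slope_comm f a b
    _ ≤ slope f b b' := hf.slope_mono hb ⟨ha, hab.ne⟩ ⟨hb', hb'b.ne⟩ hab'
    _ = slope f b' b := slope_comm f b b'

theorem antitoneOn_add_comp_affine {g : ℝ → ℝ} {s I : Set ℝ} (hg : ConvexOn ℝ s g)
    (hgm : MonotoneOn g s) {p q α β γ : ℝ} (hq : 0 ≤ q) (hα : 0 < α) (hγ : 0 < γ)
    (hpq : p * α ≤ q * γ) (hI : ∀ z ∈ I, α * z ∈ s ∧ β - γ * z ∈ s ∧ α * z ≤ β - γ * z) :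
    AntitoneOn (fun z => p * g (α * z) + q * g (β - γ * z)) I := by
  intro x hx y hy hxy
  obtain ⟨hax, hbx, -⟩ := hI x hx
  obtain ⟨hay, hby, hayby⟩ := hI y hy
  rcases hxy.eq_or_lt with rfl | hxy
  · rfl
  have hyx : 0 < y - x := sub_pos.2 hxy
  have hslope := hg.slope_le_slope_of_le hax hay hby hbx (by gcongr) (by gcongr)
    ((mul_le_mul_of_nonneg_left hxy.le hα.le).trans hayby) (hayby.trans (by gcongr))
  rw [slope_def_field, slope_def_field, show α * y - α * x = α * (y - x) by ring,
    show β - γ * x - (β - γ * y) = γ * (y - x) by ring,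
    div_le_div_iff₀ (mul_pos hα hyx) (mul_pos hγ hyx)] at hslope
  set rise := g (α * y) - g (α * x)
  set drop := g (β - γ * x) - g (β - γ * y)
  have hrise : 0 ≤ rise := sub_nonneg.2 (hgm hax hay (by gcongr))
  have hdrop : γ * rise ≤ α * drop :=
    le_of_mul_le_mul_right (by linear_combination hslope) hyx
  have hscaled : α * (p * rise) ≤ α * (q * drop) := calc
    α * (p * rise) = (p * α) * rise := by ring
    _ ≤ (q * γ) * rise := by gcongr
    _ = q * (γ * rise) := by ring
    _ ≤ q * (α * drop) := by gcongr
    _ = α * (q * drop) := by ring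
  have hgain := le_of_mul_le_mul_left hscaled hα
  simp only [rise, drop] at hgain ⊢
  linarith

noncomputable def xDivOneSubExpNeg (t : ℝ) : ℝ := t / (1 - exp (-t))

theorem one_sub_exp_neg_pos {t : ℝ} (ht : 0 < t) : 0 < 1 - exp (-t) :=
  sub_pos.2 (exp_lt_one_iff.2 (neg_neg_of_pos ht))

theorem add_one_mul_exp_neg_le_one (t : ℝ) : (t + 1) * exp (-t) ≤ 1 := by
  calc (t + 1) * exp (-t) ≤ exp t * exp (-t) := by gcongr; exact add_one_le_exp t
    _ = 1 := by rw [← exp_add, add_neg_cancel, exp_zero]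

theorem hasDerivAt_exp_neg (t : ℝ) : HasDerivAt (fun s => exp (-s)) (-exp (-t)) t := by
  simpa using (hasDerivAt_neg t).exp

theorem two_mul_one_sub_exp_neg_le {t : ℝ} (ht : 0 ≤ t) :
    2 * (1 - exp (-t)) ≤ t * (1 + exp (-t)) := by
  have hderiv (s : ℝ) : HasDerivAt (fun s => s * (1 + exp (-s)) - 2 * (1 - exp (-s)))
      (1 - (s + 1) * exp (-s)) s :=
    (((hasDerivAt_id s).mul ((hasDerivAt_exp_neg s).const_add 1)).sub
      (((hasDerivAt_exp_neg s).const_sub 1).const_mul 2)).congr_deriv (by simp only [id]; ring)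
  have := monotone_of_hasDerivAt_nonneg hderiv
    (fun s => sub_nonneg.2 (add_one_mul_exp_neg_le_one s)) ht
  simp only [neg_zero, exp_zero, mul_zero, sub_self, zero_mul] at this
  linarith

theorem hasDerivAt_xDivOneSubExpNeg {t : ℝ} (ht : 0 < t) :
    HasDerivAt xDivOneSubExpNeg ((1 - (t + 1) * exp (-t)) / (1 - exp (-t)) ^ 2) t :=
  ((hasDerivAt_id t).div ((hasDerivAt_exp_neg t).const_sub 1)
    (one_sub_exp_neg_pos ht).ne').congr_deriv (by simp only [id]; field_simp; ring)

theorem hasDerivAt_deriv_xDivOneSubExpNeg {t : ℝ} (ht : 0 < t) :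
    HasDerivAt (fun s => (1 - (s + 1) * exp (-s)) / (1 - exp (-s)) ^ 2)
      (exp (-t) * (t * (1 + exp (-t)) - 2 * (1 - exp (-t))) / (1 - exp (-t)) ^ 3) t := by
  have hD := one_sub_exp_neg_pos ht
  exact ((((hasDerivAt_id t).add_const 1).mul (hasDerivAt_exp_neg t) |>.const_sub 1).div
    (((hasDerivAt_exp_neg t).const_sub 1).pow 2) (pow_pos hD 2).ne').congr_deriv
    (by simp only [id, Pi.mul_apply, Pi.pow_apply]; field_simp; ring)

theorem convexOn_xDivOneSubExpNeg : ConvexOn ℝ (Ioi 0) xDivOneSubExpNeg := by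
  refine convexOn_of_hasDerivWithinAt2_nonneg (convex_Ioi 0)
    (f' := fun t => (1 - (t + 1) * exp (-t)) / (1 - exp (-t)) ^ 2)
    (f'' := fun t => exp (-t) * (t * (1 + exp (-t)) - 2 * (1 - exp (-t))) / (1 - exp (-t)) ^ 3)
    (fun t ht => (hasDerivAt_xDivOneSubExpNeg ht).continuousAt.continuousWithinAt)
    (fun t ht => ?_) (fun t ht => ?_) (fun t ht => ?_) <;> rw [interior_Ioi] at ht
  · exact (hasDerivAt_xDivOneSubExpNeg ht).hasDerivWithinAt
  · exact (hasDerivAt_deriv_xDivOneSubExpNeg ht).hasDerivWithinAt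
  · have hD := one_sub_exp_neg_pos ht
    have hnum := two_mul_one_sub_exp_neg_le ht.le
    exact div_nonneg (mul_nonneg (exp_pos _).le (by linarith)) (by positivity)

theorem monotoneOn_xDivOneSubExpNeg : MonotoneOn xDivOneSubExpNeg (Ioi 0) := by
  refine monotoneOn_of_hasDerivWithinAt_nonneg (convex_Ioi 0)
    (f' := fun t => (1 - (t + 1) * exp (-t)) / (1 - exp (-t)) ^ 2)
    (fun t ht => (hasDerivAt_xDivOneSubExpNeg ht).continuousAt.continuousWithinAt)
    (fun t ht => ?_) (fun t ht => ?_) <;> rw [interior_Ioi] at ht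
  · exact (hasDerivAt_xDivOneSubExpNeg ht).hasDerivWithinAt
  · exact div_nonneg (sub_nonneg.2 (add_one_mul_exp_neg_le_one t)) (sq_nonneg _)

theorem stmt_12_general (M B_f B_m A_m lam_u lam_f Xmin Xmax : ℝ)
    (hBf : 0 < B_f) (hBm : 0 < B_m) (hAm : 0 < A_m)
    (hlu : 0 < lam_u) (hlf : 0 < lam_f)
    (hXmin : 0 < Xmin) (hXle : Xmin ≤ Xmax)
    (F : ℝ → ℝ)
    (hF : ∀ x, F x =
        (M * lam_u * x) / (B_f * (1 - Real.exp (-(lam_u * x)))) +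
        (A_m * lam_u * (1 - lam_f * x)) /
          (B_m * (1 - Real.exp (-(A_m * lam_u * (1 - lam_f * x))))))
    (h1 : lam_f * A_m * B_f > M * B_m)
    (h2 : ∀ x ∈ Set.Icc Xmin Xmax, A_m * (1 - lam_f * x) ≥ x) :
    AntitoneOn F (Set.Icc Xmin Xmax) ∧
      ∀ x ∈ Set.Icc Xmin Xmax, F Xmax ≤ F x := by
  have hF' : F = fun z => M / B_f * xDivOneSubExpNeg (lam_u * z) +
      B_m⁻¹ * xDivOneSubExpNeg (A_m * lam_u - A_m * lam_u * lam_f * z) := by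
    funext z
    rw [hF, xDivOneSubExpNeg, xDivOneSubExpNeg,
      show A_m * lam_u * (1 - lam_f * z) = A_m * lam_u - A_m * lam_u * lam_f * z by ring]
    simp only [div_eq_mul_inv, mul_inv]
    ring
  have hanti : AntitoneOn F (Icc Xmin Xmax) := by
    rw [hF']
    refine antitoneOn_add_comp_affine convexOn_xDivOneSubExpNeg monotoneOn_xDivOneSubExpNeg
      (by positivity) hlu (by positivity) ?_ fun z hz => ?_
    · field_simp
      linarith [mul_le_mul_of_nonneg_left h1.le hlu.le]
    · have hαz : 0 < lam_u * z := mul_pos hlu (hXmin.trans_le hz.1)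
      have hle : lam_u * z ≤ A_m * lam_u - A_m * lam_u * lam_f * z := by linarith [mul_le_mul_of_nonneg_left (h2 z hz) hlu.le]
      exact ⟨hαz, hαz.trans_le hle, hle⟩
  exact ⟨hanti, fun x hx => hanti hx ⟨hXle, le_rfl⟩ hx.2⟩

/-- Proposition 4: under `λ_f·A_m·B_f > M·B_m` and
`A_m·(1 − λ_f x) ≥ x` on the feasible interval, the objective `F` is antitone
on `[X_min, X_max]`, so its minimum is attained at `X_max`. -/
theorem stmt_12 (M B_f B_m A_m lam_u lam_f Xmin Xmax : ℝ)
    (hM : 0 < M) (hBf : 0 < B_f) (hBm : 0 < B_m) (hAm : 0 < A_m)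
    (hlu : 0 < lam_u) (hlf : 0 < lam_f)
    (hXmin : 0 < Xmin) (hXle : Xmin ≤ Xmax) (hXmax : Xmax < 1 / lam_f)
    (F : ℝ → ℝ)
    (hF : ∀ x, F x =
        (M * lam_u * x) / (B_f * (1 - Real.exp (-(lam_u * x)))) +
        (A_m * lam_u * (1 - lam_f * x)) /
          (B_m * (1 - Real.exp (-(A_m * lam_u * (1 - lam_f * x))))))
    (h1 : lam_f * A_m * B_f > M * B_m)
    (h2 : ∀ x ∈ Set.Icc Xmin Xmax, A_m * (1 - lam_f * x) ≥ x) :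
    AntitoneOn F (Set.Icc Xmin Xmax) ∧
      ∀ x ∈ Set.Icc Xmin Xmax, F Xmax ≤ F x :=
  stmt_12_general M B_f B_m A_m lam_u lam_f Xmin Xmax hBf hBm hAm hlu hlf hXmin hXle F hF h1 h2
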